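/- For every integer n ≥ 1 and real r > 1, ((1/n)∑_{i=1}^n i^r / ((1/(n+1))∑_{i=1}^{n+1} i^r))^{1/r} ≤ (n+1)/(n+2), with the reverse inequality for 0 < r < 1. -/

import Mathlib

/-!
Raising both sides to the power `r` and writing `f x = x ^ r`, the claim becomes
`(n + 1) ∑_{i ≤ n} f (i / (n + 1)) ≤ n ∑_{i ≤ n + 1} f (i / (n + 2))`, reversed for `r < 1`.
This holds for every convex `f` on `[0, 1]`: the node `i / (n + 1)` is a convex combination of its
neighbours `i / (n + 2)` and `(i + 1) / (n + 2)` with weights `(n + 1 - i) / (n + 1)` and `i / (n + 1)`,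
and summing these Jensen inequalities gives every node `j / (n + 2)` the same total weight `n / (n + 1)`.
-/

open Finset Real

theorem sum_Icc_weighted_shift {R : Type*} [CommRing R] (g : ℕ → R) (n : ℕ) :
    ∑ i ∈ Icc 1 n, (((n : R) + 1 - i) * g i + i * g (i + 1)) = n * ∑ i ∈ Icc 1 (n + 1), g i := by
  induction n with
  | zero => simp
  | succ n ih =>
    have peel : ∑ i ∈ Icc 1 n, ((((n + 1 : ℕ) : R) + 1 - i) * g i + i * g (i + 1)) =
        ∑ i ∈ Icc 1 n, (((n : R) + 1 - i) * g i + i * g (i + 1)) + ∑ i ∈ Icc 1 n, g i := by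
      rw [← sum_add_distrib]
      exact sum_congr rfl fun i _ => by push_cast; ring
    rw [sum_Icc_succ_top (by omega), peel, ih, sum_Icc_succ_top (b := n + 1) (by omega),
      sum_Icc_succ_top (b := n) (by omega)]
    push_cast
    ring

theorem ConvexOn.mul_sum_Icc_div_add_one_le {f : ℝ → ℝ} (hf : ConvexOn ℝ (Set.Icc 0 1) f)
    (n : ℕ) :
    (n + 1) * ∑ i ∈ Icc 1 n, f (i / (n + 1)) ≤ n * ∑ i ∈ Icc 1 (n + 1), f (i / (n + 2)) := by
  have hn1 : (0 : ℝ) < n + 1 := by positivity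
  have pointwise : ∀ i ∈ Icc 1 n, (n + 1) * f (i / (n + 1)) ≤
      ((n : ℝ) + 1 - i) * f (i / (n + 2)) + i * f ((i + 1 : ℕ) / (n + 2)) := by
    intro i hi
    have hin : i ≤ n := (mem_Icc.mp hi).2
    have mem : ∀ j ≤ n + 1, (j : ℝ) / (n + 2) ∈ Set.Icc (0 : ℝ) 1 := fun j hj =>
      ⟨by positivity, (div_le_one (by positivity)).2 (by norm_cast; omega)⟩
    have hconv := hf.2 (mem i (by omega)) (mem (i + 1) (by omega))
      (div_nonneg (by linarith [(Nat.cast_le (α := ℝ)).2 hin]) hn1.le :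
        0 ≤ ((n : ℝ) + 1 - i) / (n + 1))
      (by positivity : (0 : ℝ) ≤ i / (n + 1)) (by field_simp; ring)
    have hcomb : ((n : ℝ) + 1 - i) / (n + 1) * (i / (n + 2)) +
        i / (n + 1) * ((i + 1 : ℕ) / (n + 2)) = i / (n + 1) := by
      push_cast; field_simp; ring
    simp only [smul_eq_mul, hcomb] at hconv
    calc (n + 1) * f (i / (n + 1))
        ≤ (n + 1) * ((n + 1 - i) / (n + 1) * f (i / (n + 2)) +
            i / (n + 1) * f ((i + 1 : ℕ) / (n + 2))) := by gcongr
      _ = _ := by field_simp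
  calc (n + 1) * ∑ i ∈ Icc 1 n, f (i / (n + 1))
      ≤ ∑ i ∈ Icc 1 n,
          (((n : ℝ) + 1 - i) * f (i / (n + 2)) + i * f ((i + 1 : ℕ) / (n + 2))) := by
        rw [mul_sum]; exact sum_le_sum pointwise
    _ = n * ∑ i ∈ Icc 1 (n + 1), f (i / (n + 2)) :=
        sum_Icc_weighted_shift (fun i => f (i / (n + 2))) n

theorem Finset.sum_div_rpow {ι : Type*} (s : Finset ι) {x : ι → ℝ} (hx : ∀ i ∈ s, 0 ≤ x i)
    {c : ℝ} (hc : 0 ≤ c) (r : ℝ) : ∑ i ∈ s, (x i / c) ^ r = (∑ i ∈ s, x i ^ r) / c ^ r := by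
  rw [sum_div]
  exact sum_congr rfl fun i hi => div_rpow (hx i hi) hc r

theorem mul_sum_Icc_rpow_div_le {r : ℝ} (hr : 1 ≤ r) (n : ℕ) :
    (n + 1) * ((∑ i ∈ Icc 1 n, (i : ℝ) ^ r) / (n + 1) ^ r) ≤
      n * ((∑ i ∈ Icc 1 (n + 1), (i : ℝ) ^ r) / (n + 2) ^ r) := by
  have h := ((convexOn_rpow hr).subset Set.Icc_subset_Ici_self
    (convex_Icc 0 1)).mul_sum_Icc_div_add_one_le n
  rwa [sum_div_rpow _ (fun i _ => i.cast_nonneg) (by positivity),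
    sum_div_rpow _ (fun i _ => i.cast_nonneg) (by positivity)] at h

theorem mul_sum_Icc_rpow_div_ge {r : ℝ} (hr₀ : 0 ≤ r) (hr₁ : r ≤ 1) (n : ℕ) :
    n * ((∑ i ∈ Icc 1 (n + 1), (i : ℝ) ^ r) / (n + 2) ^ r) ≤
      (n + 1) * ((∑ i ∈ Icc 1 n, (i : ℝ) ^ r) / (n + 1) ^ r) := by
  have h := ((concaveOn_rpow hr₀ hr₁).subset Set.Icc_subset_Ici_self
    (convex_Icc 0 1)).neg.mul_sum_Icc_div_add_one_le n
  simp only [Pi.neg_apply, sum_neg_distrib, mul_neg, neg_le_neg_iff] at h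
  rwa [sum_div_rpow _ (fun i _ => i.cast_nonneg) (by positivity),
    sum_div_rpow _ (fun i _ => i.cast_nonneg) (by positivity)] at h

theorem bennett_inequality (n : ℕ) (hn : 1 ≤ n) :
    (∀ r : ℝ, 1 < r →
      ((1 / n * ∑ i ∈ Finset.Icc 1 n, (i : ℝ) ^ r) /
          (1 / (n + 1) * ∑ i ∈ Finset.Icc 1 (n + 1), (i : ℝ) ^ r)) ^ (1 / r) ≤
        ((n : ℝ) + 1) / ((n : ℝ) + 2)) ∧
    (∀ r : ℝ, 0 < r → r < 1 →
      ((1 / n * ∑ i ∈ Finset.Icc 1 n, (i : ℝ) ^ r) /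
          (1 / (n + 1) * ∑ i ∈ Finset.Icc 1 (n + 1), (i : ℝ) ^ r)) ^ (1 / r) ≥
        ((n : ℝ) + 1) / ((n : ℝ) + 2)) := by
  have hn₀ : (0 : ℝ) < n := by exact_mod_cast hn
  have hS : ∀ r : ℝ, 0 < ∑ i ∈ Icc 1 (n + 1), (i : ℝ) ^ r := fun r =>
    sum_pos (fun i hi => by have := (mem_Icc.mp hi).1; positivity) ⟨1, by simp⟩
  have hY : ∀ r : ℝ, 0 < n * ((∑ i ∈ Icc 1 (n + 1), (i : ℝ) ^ r) / (n + 2) ^ r) := fun r => by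
    have := hS r; positivity
  have hratio : ∀ r : ℝ,
      (1 / n * ∑ i ∈ Icc 1 n, (i : ℝ) ^ r) / (1 / (n + 1) * ∑ i ∈ Icc 1 (n + 1), (i : ℝ) ^ r) =
      (n + 1) * ((∑ i ∈ Icc 1 n, (i : ℝ) ^ r) / (n + 1) ^ r) /
        (n * ((∑ i ∈ Icc 1 (n + 1), (i : ℝ) ^ r) / (n + 2) ^ r)) * (((n : ℝ) + 1) / (n + 2)) ^ r := by
    intro r
    have := (hS r).ne'
    rw [div_rpow (by positivity) (by positivity)]
    field_simp
  refine ⟨fun r hr => ?_, fun r hr₀ hr₁ => ?_⟩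
  · rw [hratio, one_div, rpow_inv_le_iff_of_pos (by positivity) (by positivity) (by positivity),
      mul_le_iff_le_one_left (by positivity), div_le_one (hY r)]
    exact mul_sum_Icc_rpow_div_le hr.le n
  · rw [ge_iff_le, hratio, one_div, le_rpow_inv_iff_of_pos (by positivity) (by positivity) hr₀,
      le_mul_iff_one_le_left (by positivity), one_le_div (hY r)]
    exact mul_sum_Icc_rpow_div_ge hr₀.le hr₁.le n
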